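/- arXiv:2409.15952 — 3 statements merged into one kernel-verified Lean document; each statement's English description precedes it below -/
import Mathlib

section
/- Let n ≥ 1, let W : Fin n → Fin n → ℝ be symmetric with nonnegative entries and W i i = 0, let L be the graph Laplacian L i i = ∑_j W i j, L i j = -W i j (i ≠ j), let m : Fin n → ℝ be strictly positive, M = diag(m), and τ > 0. If x, y : Fin n → ℝ satisfy M (x - y) + τ • L x = 0, then the solution satisfies the discrete maximum principle: for every index i, (min over j of y j) ≤ x i ≤ (max over j of y j). -/
open Matrix

/-! At a maximum `i` of `x`, every term of `(L x) i = ∑ⱼ W i j (x i - x j)` is nonnegative, so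
the equation `m i (x i - y i) = -τ (L x) i` gives `x i ≤ y i ≤ max y`; minima are symmetric. -/

section ZeroRowSum

variable {ι : Type*} [Fintype ι] {L : Matrix ι ι ℝ}

theorem mulVec_apply_eq_sum_mul_sub_of_rowSum_eq_zero (hrow : ∀ i, ∑ j, L i j = 0)
    (x : ι → ℝ) (i : ι) : (L *ᵥ x) i = ∑ j, L i j * (x j - x i) := by
  simp only [mul_sub, Finset.sum_sub_distrib, ← Finset.sum_mul, hrow, zero_mul, sub_zero]
  rfl

theorem mulVec_apply_nonneg_of_forall_le (hoff : ∀ i j, i ≠ j → L i j ≤ 0)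
    (hrow : ∀ i, ∑ j, L i j = 0) {x : ι → ℝ} {i : ι} (hmax : ∀ j, x j ≤ x i) :
    0 ≤ (L *ᵥ x) i := by
  rw [mulVec_apply_eq_sum_mul_sub_of_rowSum_eq_zero hrow]
  refine Finset.sum_nonneg fun j _ => ?_
  rcases eq_or_ne i j with rfl | hij
  · simp
  · exact mul_nonneg_of_nonpos_of_nonpos (hoff i j hij) (sub_nonpos.mpr (hmax j))

variable [DecidableEq ι] {m : ι → ℝ} {τ : ℝ} {x y : ι → ℝ}

theorem le_of_implicit_step_of_forall_le (hoff : ∀ i j, i ≠ j → L i j ≤ 0)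
    (hrow : ∀ i, ∑ j, L i j = 0) (hm : ∀ i, 0 < m i) (hτ : 0 ≤ τ)
    (hstep : diagonal m *ᵥ (x - y) + τ • L *ᵥ x = 0) {i : ι} (hmax : ∀ j, x j ≤ x i) :
    x i ≤ y i := by
  have hi : m i * (x i - y i) + τ * (L *ᵥ x) i = 0 := by
    simpa [mulVec_diagonal] using congrFun hstep i
  have hLx : 0 ≤ τ * (L *ᵥ x) i := mul_nonneg hτ (mulVec_apply_nonneg_of_forall_le hoff hrow hmax)
  have : m i * (x i - y i) ≤ 0 := by linarith
  nlinarith [hm i]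

theorem le_of_implicit_step_of_forall_ge (hoff : ∀ i j, i ≠ j → L i j ≤ 0)
    (hrow : ∀ i, ∑ j, L i j = 0) (hm : ∀ i, 0 < m i) (hτ : 0 ≤ τ)
    (hstep : diagonal m *ᵥ (x - y) + τ • L *ᵥ x = 0) {i : ι} (hmin : ∀ j, x i ≤ x j) :
    y i ≤ x i := by
  have hstep' : diagonal m *ᵥ (-x - -y) + τ • L *ᵥ (-x) = 0 := by
    rw [← neg_sub', mulVec_neg, mulVec_neg, smul_neg, ← neg_add, hstep, neg_zero]
  simpa using le_of_implicit_step_of_forall_le hoff hrow hm hτ hstep' (x := -x) (y := -y)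
    fun j => neg_le_neg (hmin j)

end ZeroRowSum

theorem laplacian_rowSum_eq_zero {ι : Type*} [Fintype ι] [DecidableEq ι]
    {W : ι → ι → ℝ} (hWdiag : ∀ i, W i i = 0) {L : Matrix ι ι ℝ}
    (hLdiag : ∀ i, L i i = ∑ j, W i j) (hLoff : ∀ i j, i ≠ j → L i j = -W i j) (i : ι) :
    ∑ j, L i j = 0 := by
  have hL : ∀ j, L i j = (if i = j then ∑ k, W i k else 0) - W i j := by
    intro j
    rcases eq_or_ne i j with rfl | hij
    · simp [hLdiag, hWdiag]
    · simp [hLoff i j hij, hij]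
  simp [hL, Finset.sum_sub_distrib]

theorem implicit_step_maximum_principle_general
    (n : ℕ) (hn : 1 ≤ n) (W : Fin n → Fin n → ℝ)
    (hWnn : ∀ i j, 0 ≤ W i j)
    (hWdiag : ∀ i, W i i = 0)
    (L : Matrix (Fin n) (Fin n) ℝ)
    (hLdiag : ∀ i, L i i = ∑ j, W i j)
    (hLoff : ∀ i j, i ≠ j → L i j = - W i j)
    (m : Fin n → ℝ) (hm : ∀ i, 0 < m i)
    (τ : ℝ) (hτ : 0 < τ)
    (x y : Fin n → ℝ)
    (hstep : (Matrix.diagonal m).mulVec (x - y) + τ • L.mulVec x = 0) :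
    ∀ i,
      Finset.univ.inf' (Finset.univ_nonempty_iff.mpr ⟨⟨0, hn⟩⟩) y ≤ x i ∧
      x i ≤ Finset.univ.sup' (Finset.univ_nonempty_iff.mpr ⟨⟨0, hn⟩⟩) y := by
  have hoff : ∀ i j, i ≠ j → L i j ≤ 0 := fun i j hij => by
    rw [hLoff i j hij, neg_nonpos]; exact hWnn i j
  have hrow := laplacian_rowSum_eq_zero hWdiag hLdiag hLoff
  intro i
  have : Nonempty (Fin n) := ⟨i⟩
  obtain ⟨imin, himin⟩ := Finite.exists_min x
  obtain ⟨imax, himax⟩ := Finite.exists_max x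
  constructor
  · calc _ ≤ y imin := Finset.inf'_le _ (Finset.mem_univ imin)
      _ ≤ x imin := le_of_implicit_step_of_forall_ge hoff hrow hm hτ.le hstep himin
      _ ≤ x i := himin i
  · calc x i ≤ x imax := himax i
      _ ≤ y imax := le_of_implicit_step_of_forall_le hoff hrow hm hτ.le hstep himax
      _ ≤ _ := Finset.le_sup' _ (Finset.mem_univ imax)

/-- Discrete maximum principle for one implicit time step of the finite volume
scheme: every new pixel intensity lies between the minimum and the maximum of
the previous pixel intensities. -/
theorem implicit_step_maximum_principle
    (n : ℕ) (hn : 1 ≤ n) (W : Fin n → Fin n → ℝ)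
    (hWsym : ∀ i j, W i j = W j i) (hWnn : ∀ i j, 0 ≤ W i j)
    (hWdiag : ∀ i, W i i = 0)
    (L : Matrix (Fin n) (Fin n) ℝ)
    (hLdiag : ∀ i, L i i = ∑ j, W i j)
    (hLoff : ∀ i j, i ≠ j → L i j = - W i j)
    (m : Fin n → ℝ) (hm : ∀ i, 0 < m i)
    (τ : ℝ) (hτ : 0 < τ)
    (x y : Fin n → ℝ)
    (hstep : (Matrix.diagonal m).mulVec (x - y) + τ • L.mulVec x = 0) :
    ∀ i,
      Finset.univ.inf' (Finset.univ_nonempty_iff.mpr ⟨⟨0, hn⟩⟩) y ≤ x i ∧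
      x i ≤ Finset.univ.sup' (Finset.univ_nonempty_iff.mpr ⟨⟨0, hn⟩⟩) y :=
  implicit_step_maximum_principle_general n hn W hWnn hWdiag L hLdiag hLoff m hm τ hτ x y hstep
end

section
/- Let n ≥ 1, let W : Fin n → Fin n → ℝ be symmetric with nonnegative entries and W i i = 0, let L be the graph Laplacian L i i = ∑_j W i j, L i j = -W i j (i ≠ j), let m : Fin n → ℝ be strictly positive, M = diag(m), and τ > 0. If x, y : Fin n → ℝ satisfy M (x - y) + τ • L x = 0, then the implicit step is stable in the weighted L² norm: ∑_i m i * (x i)^2 ≤ ∑_i m i * (y i)^2. -/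
/-!
Write `L = D - W + diag(Wᵢᵢ)` with `D` the diagonal of row sums. The graph-Laplacian part has
quadratic form `½ ∑ᵢⱼ Wᵢⱼ (xᵢ - xⱼ)²`, so `L` is positive semidefinite. Pairing the step equation
with `x` gives `⟪x, x - y⟫_M = -τ xᵀLx ≤ 0`, and then
`‖y‖²_M = ‖x‖²_M - 2⟪x, x - y⟫_M + ‖x - y‖²_M ≥ ‖x‖²_M`.
-/

open Matrix

namespace Matrix

variable {ι R : Type*} [Fintype ι] [DecidableEq ι]

def weightedLaplacian [Ring R] (W : Matrix ι ι R) : Matrix ι ι R :=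
  diagonal (fun i => ∑ j, W i j) - W

theorem two_mul_dotProduct_weightedLaplacian_mulVec [CommRing R] {W : Matrix ι ι R}
    (hW : W.IsSymm) (x : ι → R) :
    2 * (x ⬝ᵥ W.weightedLaplacian *ᵥ x) = ∑ i, ∑ j, W i j * (x i - x j) ^ 2 := by
  have hquad : x ⬝ᵥ W.weightedLaplacian *ᵥ x =
      ∑ i, ∑ j, W i j * x i ^ 2 - ∑ i, ∑ j, W i j * x i * x j := by
    rw [weightedLaplacian, sub_mulVec, dotProduct_sub]
    simp only [dotProduct, mulVec_diagonal]
    simp only [mulVec, dotProduct, Finset.mul_sum, Finset.sum_mul]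
    congr 1 <;> exact Finset.sum_congr rfl fun i _ => Finset.sum_congr rfl fun j _ => by ring
  have hswap : ∑ i, ∑ j, W i j * x j ^ 2 = ∑ i, ∑ j, W i j * x i ^ 2 := by
    rw [Finset.sum_comm]
    simp_rw [hW.apply]
  have hexpand : ∑ i, ∑ j, W i j * (x i - x j) ^ 2 = ∑ i, ∑ j, W i j * x i ^ 2
      - 2 * ∑ i, ∑ j, W i j * x i * x j + ∑ i, ∑ j, W i j * x j ^ 2 := by
    simp only [Finset.mul_sum, ← Finset.sum_sub_distrib, ← Finset.sum_add_distrib]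
    exact Finset.sum_congr rfl fun i _ => Finset.sum_congr rfl fun j _ => by ring
  rw [hexpand, hswap, hquad]
  ring

theorem posSemidef_weightedLaplacian [Field R] [LinearOrder R] [IsStrictOrderedRing R]
    [StarRing R] [TrivialStar R] {W : Matrix ι ι R} (hW : W.IsSymm) (hW₀ : ∀ i j, 0 ≤ W i j) :
    W.weightedLaplacian.PosSemidef := by
  refine .of_dotProduct_mulVec_nonneg ?_ fun x => ?_
  · rw [IsHermitian, conjTranspose_eq_transpose_of_trivial, weightedLaplacian, transpose_sub,
      diagonal_transpose, hW.eq]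
  · have h := two_mul_dotProduct_weightedLaplacian_mulVec hW x
    have hsq : 0 ≤ ∑ i, ∑ j, W i j * (x i - x j) ^ 2 :=
      Finset.sum_nonneg fun i _ => Finset.sum_nonneg fun j _ => mul_nonneg (hW₀ i j) (sq_nonneg _)
    rw [star_trivial]
    linarith

theorem eq_weightedLaplacian_add_diagonal [Ring R] {W L : Matrix ι ι R}
    (hLdiag : ∀ i, L i i = ∑ j, W i j) (hLoff : ∀ i j, i ≠ j → L i j = -W i j) :
    L = W.weightedLaplacian + diagonal (fun i => W i i) := by
  ext i j
  obtain rfl | hij := eq_or_ne i j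
  · simp [weightedLaplacian, hLdiag]
  · simp [weightedLaplacian, hLoff i j hij, hij]

theorem sum_mul_sq_le_of_dotProduct_diagonal_mulVec_sub_nonpos [CommRing R] [LinearOrder R]
    [IsStrictOrderedRing R] {m x y : ι → R} (hm : ∀ i, 0 ≤ m i)
    (h : x ⬝ᵥ diagonal m *ᵥ (x - y) ≤ 0) :
    ∑ i, m i * x i ^ 2 ≤ ∑ i, m i * y i ^ 2 := by
  have hdist : 0 ≤ ∑ i, m i * (x i - y i) ^ 2 :=
    Finset.sum_nonneg fun i _ => mul_nonneg (hm i) (sq_nonneg _)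
  have hpolar : ∑ i, m i * y i ^ 2 =
      ∑ i, m i * x i ^ 2 - 2 * (x ⬝ᵥ diagonal m *ᵥ (x - y)) + ∑ i, m i * (x i - y i) ^ 2 := by
    simp only [dotProduct, mulVec_diagonal, Finset.mul_sum, ← Finset.sum_sub_distrib,
      ← Finset.sum_add_distrib, Pi.sub_apply]
    exact Finset.sum_congr rfl fun i _ => by ring
  linarith

end Matrix

theorem implicit_step_weighted_L2_stability_general
    (n : ℕ) (W : Fin n → Fin n → ℝ)
    (hWsym : ∀ i j, W i j = W j i) (hWnn : ∀ i j, 0 ≤ W i j)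
    (L : Matrix (Fin n) (Fin n) ℝ)
    (hLdiag : ∀ i, L i i = ∑ j, W i j)
    (hLoff : ∀ i j, i ≠ j → L i j = - W i j)
    (m : Fin n → ℝ) (hm : ∀ i, 0 < m i)
    (τ : ℝ) (hτ : 0 < τ)
    (x y : Fin n → ℝ)
    (hstep : (Matrix.diagonal m).mulVec (x - y) + τ • L.mulVec x = 0) :
    ∑ i, m i * (x i) ^ 2 ≤ ∑ i, m i * (y i) ^ 2 := by
  have hL : L.PosSemidef := by
    rw [eq_weightedLaplacian_add_diagonal hLdiag hLoff]
    exact (posSemidef_weightedLaplacian (W := W) (IsSymm.ext fun i j => hWsym j i) hWnn).add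
      (.diagonal fun i => hWnn i i)
  have hdecay : diagonal m *ᵥ (x - y) = -(τ • L *ᵥ x) := eq_neg_of_add_eq_zero_left hstep
  refine sum_mul_sq_le_of_dotProduct_diagonal_mulVec_sub_nonpos (fun i => (hm i).le) ?_
  rw [hdecay, dotProduct_neg, dotProduct_smul, smul_eq_mul, neg_nonpos]
  exact mul_nonneg hτ.le (by simpa using hL.dotProduct_mulVec_nonneg x)

/-- Stability of the implicit step in the weighted L² norm:
`∑ᵢ mᵢ xᵢ² ≤ ∑ᵢ mᵢ yᵢ²`. -/
theorem implicit_step_weighted_L2_stability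
    (n : ℕ) (hn : 1 ≤ n) (W : Fin n → Fin n → ℝ)
    (hWsym : ∀ i j, W i j = W j i) (hWnn : ∀ i j, 0 ≤ W i j)
    (hWdiag : ∀ i, W i i = 0)
    (L : Matrix (Fin n) (Fin n) ℝ)
    (hLdiag : ∀ i, L i i = ∑ j, W i j)
    (hLoff : ∀ i j, i ≠ j → L i j = - W i j)
    (m : Fin n → ℝ) (hm : ∀ i, 0 < m i)
    (τ : ℝ) (hτ : 0 < τ)
    (x y : Fin n → ℝ)
    (hstep : (Matrix.diagonal m).mulVec (x - y) + τ • L.mulVec x = 0) :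
    ∑ i, m i * (x i) ^ 2 ≤ ∑ i, m i * (y i) ^ 2 :=
  implicit_step_weighted_L2_stability_general n W hWsym hWnn L hLdiag hLoff m hm τ hτ x y hstep
end

section
/- Let n, H ≥ 1, let W : Fin n → Fin n → ℝ be symmetric with nonnegative entries and W i i = 0, let L be the graph Laplacian L i i = ∑_j W i j, L i j = -W i j (i ≠ j), let m : Fin n → ℝ be strictly positive, M = diag(m), τ > 0, and let R : Matrix (Fin H) (Fin n) ℝ have linearly independent rows. Set L_H = R * L * Rᵀ and M_H = R * M * Rᵀ. If the coarse vectors x, y : Fin H → ℝ satisfy M_H.mulVec (x - y) + τ • L_H.mulVec x = 0, then the reconstructed fine-grid solution u = Rᵀ.mulVec x satisfies the weighted stability estimate ∑_i m i * (u i)^2 ≤ ∑_i m i * ((Rᵀ.mulVec y) i)^2. -/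
/-!
Testing the coarse step against `x` gives the energy identity
`⟨u, M (u - v)⟩ + τ ⟨u, L u⟩ = 0` for `u = Rᵀ x`, `v = Rᵀ y`, because a Galerkin matrix satisfies
`xᵀ (R A Rᵀ) z = (Rᵀ x)ᵀ A (Rᵀ z)`. The graph Laplacian has quadratic form
`½ ∑ᵢⱼ Wᵢⱼ (uᵢ - uⱼ)² ≥ 0`, hence `⟨u, u - v⟩_M ≤ 0`, and the pointwise identity
`u² - v² = 2 u (u - v) - (u - v)²` turns this into `‖u‖_M ≤ ‖v‖_M`.
-/

open Matrix

section

variable {ι κ R : Type*} [Fintype ι] [Fintype κ]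

theorem dotProduct_mul_mul_transpose_mulVec [CommSemiring R] (P : Matrix κ ι R)
    (A : Matrix ι ι R) (x z : κ → R) :
    x ⬝ᵥ (P * A * Pᵀ) *ᵥ z = (Pᵀ *ᵥ x) ⬝ᵥ A *ᵥ (Pᵀ *ᵥ z) := by
  rw [Matrix.mul_assoc, ← mulVec_mulVec, dotProduct_mulVec, ← mulVec_transpose,
    ← mulVec_mulVec]

theorem dotProduct_diagonal_mulVec [CommSemiring R] [DecidableEq ι] (d u w : ι → R) :
    u ⬝ᵥ diagonal d *ᵥ w = ∑ i, d i * (u i * w i) := by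
  simp only [dotProduct, mulVec_diagonal]
  exact Finset.sum_congr rfl fun i _ => by ring

variable [DecidableEq ι]

def graphLaplacian [AddCommGroup R] (W : Matrix ι ι R) : Matrix ι ι R :=
  diagonal (fun i => ∑ j, W i j) - W

theorem dotProduct_graphLaplacian_mulVec [CommRing R] (W : Matrix ι ι R) (u : ι → R) :
    u ⬝ᵥ graphLaplacian W *ᵥ u = ∑ i, ∑ j, W i j * (u i ^ 2 - u i * u j) := by
  rw [graphLaplacian, sub_mulVec, dotProduct_sub, dotProduct_diagonal_mulVec]
  simp only [dotProduct, mulVec, Finset.sum_mul, Finset.mul_sum, ← Finset.sum_sub_distrib]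
  exact Fintype.sum_congr _ _ fun i => Fintype.sum_congr _ _ fun j => by ring

theorem two_mul_dotProduct_graphLaplacian_mulVec [CommRing R] {W : Matrix ι ι R}
    (hW : W.IsSymm) (u : ι → R) :
    2 * (u ⬝ᵥ graphLaplacian W *ᵥ u) = ∑ i, ∑ j, W i j * (u i - u j) ^ 2 := by
  have hswap : ∑ i, ∑ j, W i j * (u i ^ 2 - u i * u j)
      = ∑ i, ∑ j, W i j * (u j ^ 2 - u i * u j) := by
    rw [Finset.sum_comm]
    exact Fintype.sum_congr _ _ fun i => Fintype.sum_congr _ _ fun j => by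
      rw [← hW.apply i j]; ring
  rw [dotProduct_graphLaplacian_mulVec, two_mul]
  nth_rewrite 2 [hswap]
  simp only [← Finset.sum_add_distrib]
  exact Fintype.sum_congr _ _ fun i => Fintype.sum_congr _ _ fun j => by ring

theorem dotProduct_graphLaplacian_mulVec_nonneg [CommRing R] [LinearOrder R]
    [IsStrictOrderedRing R] {W : Matrix ι ι R} (hW : W.IsSymm) (hW₀ : ∀ i j, 0 ≤ W i j)
    (u : ι → R) : 0 ≤ u ⬝ᵥ graphLaplacian W *ᵥ u := by
  have h : 0 ≤ 2 * (u ⬝ᵥ graphLaplacian W *ᵥ u) := by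
    rw [two_mul_dotProduct_graphLaplacian_mulVec hW]
    exact Finset.sum_nonneg fun i _ => Finset.sum_nonneg fun j _ =>
      mul_nonneg (hW₀ i j) (sq_nonneg _)
  linarith

end

theorem weighted_sum_sq_le_of_weighted_inner_sub_nonpos {ι R : Type*} [Fintype ι]
    [CommRing R] [LinearOrder R] [IsStrictOrderedRing R] {m u v : ι → R}
    (hm : ∀ i, 0 ≤ m i) (h : ∑ i, m i * (u i * (u i - v i)) ≤ 0) :
    ∑ i, m i * u i ^ 2 ≤ ∑ i, m i * v i ^ 2 := by
  have hterm : ∀ i, m i * u i ^ 2 ≤ m i * v i ^ 2 + 2 * (m i * (u i * (u i - v i))) := by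
    intro i
    nlinarith [mul_nonneg (hm i) (sq_nonneg (u i - v i))]
  have hsum := Finset.sum_le_sum fun i (_ : i ∈ Finset.univ) => hterm i
  rw [Finset.sum_add_distrib, ← Finset.mul_sum] at hsum
  linarith

theorem coarse_step_weighted_stability_general
    (n H : ℕ)
    (W : Fin n → Fin n → ℝ)
    (hWsym : ∀ i j, W i j = W j i) (hWnn : ∀ i j, 0 ≤ W i j)
    (hWdiag : ∀ i, W i i = 0)
    (L : Matrix (Fin n) (Fin n) ℝ)
    (hLdiag : ∀ i, L i i = ∑ j, W i j)
    (hLoff : ∀ i j, i ≠ j → L i j = - W i j)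
    (m : Fin n → ℝ) (hm : ∀ i, 0 < m i)
    (τ : ℝ) (hτ : 0 < τ)
    (R : Matrix (Fin H) (Fin n) ℝ)
    (x y : Fin H → ℝ)
    (hstep : (R * Matrix.diagonal m * Rᵀ).mulVec (x - y)
        + τ • (R * L * Rᵀ).mulVec x = 0) :
    ∑ i, m i * (Rᵀ.mulVec x i) ^ 2 ≤ ∑ i, m i * (Rᵀ.mulVec y i) ^ 2 := by
  have hL : L = graphLaplacian (of W) := by
    ext i j
    by_cases hij : i = j
    · subst hij
      simp [graphLaplacian, hLdiag, hWdiag]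
    · simp [graphLaplacian, hij, hLoff i j hij]
  have hdiss : 0 ≤ τ * (Rᵀ *ᵥ x ⬝ᵥ L *ᵥ (Rᵀ *ᵥ x)) :=
    hL ▸ mul_nonneg hτ.le (dotProduct_graphLaplacian_mulVec_nonneg
      (IsSymm.ext fun i j => hWsym j i) hWnn (Rᵀ *ᵥ x))
  have henergy : Rᵀ *ᵥ x ⬝ᵥ diagonal m *ᵥ (Rᵀ *ᵥ x - Rᵀ *ᵥ y)
      + τ * (Rᵀ *ᵥ x ⬝ᵥ L *ᵥ (Rᵀ *ᵥ x)) = 0 := by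
    have h : x ⬝ᵥ ((R * diagonal m * Rᵀ) *ᵥ (x - y) + τ • (R * L * Rᵀ) *ᵥ x) = 0 := by
      rw [hstep, dotProduct_zero]
    rwa [dotProduct_add, dotProduct_smul, dotProduct_mul_mul_transpose_mulVec,
      dotProduct_mul_mul_transpose_mulVec, mulVec_sub, smul_eq_mul] at h
  simp only [dotProduct_diagonal_mulVec, Pi.sub_apply] at henergy
  exact weighted_sum_sq_le_of_weighted_inner_sub_nonpos (fun i => (hm i).le) (by linarith)

/-- Stability of the coarse-scale (GMsFEM) implicit step in the weighted `M`-norm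
of the reconstructed fine-grid solution `u = Rᵀ x`. -/
theorem coarse_step_weighted_stability
    (n H : ℕ) (hn : 1 ≤ n) (hH : 1 ≤ H)
    (W : Fin n → Fin n → ℝ)
    (hWsym : ∀ i j, W i j = W j i) (hWnn : ∀ i j, 0 ≤ W i j)
    (hWdiag : ∀ i, W i i = 0)
    (L : Matrix (Fin n) (Fin n) ℝ)
    (hLdiag : ∀ i, L i i = ∑ j, W i j)
    (hLoff : ∀ i j, i ≠ j → L i j = - W i j)
    (m : Fin n → ℝ) (hm : ∀ i, 0 < m i)
    (τ : ℝ) (hτ : 0 < τ)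
    (R : Matrix (Fin H) (Fin n) ℝ)
    (hR : LinearIndependent ℝ (fun i : Fin H => R i))
    (x y : Fin H → ℝ)
    (hstep : (R * Matrix.diagonal m * Rᵀ).mulVec (x - y)
        + τ • (R * L * Rᵀ).mulVec x = 0) :
    ∑ i, m i * (Rᵀ.mulVec x i) ^ 2 ≤ ∑ i, m i * (Rᵀ.mulVec y i) ^ 2 :=
  coarse_step_weighted_stability_general n H W hWsym hWnn hWdiag L hLdiag hLoff m hm τ hτ R x y
    hstep
end
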